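/- For every fixed k ≥ 1, the increment of the predictive information in the past window converges to the universal learning curve as the future window grows: lim_{k'→∞} ( I_pred(k+1,k') − I_pred(k,k') ) = Λ(k) = H₁(k+1) − H₁(k). -/

import Mathlib

open Filter Topology

/-- Block entropy: extensive part plus sub-extensive part. -/
noncomputable def blockEntropy (ℓ₀ : ℝ) (H₁ : ℕ → ℝ) (n : ℕ) : ℝ := n * ℓ₀ + H₁ n

/-- Predictive information `I_pred(k,k') = H(k) + H(k') − H(k+k')`. -/
noncomputable def Ipred (ℓ₀ : ℝ) (H₁ : ℕ → ℝ) (k k' : ℕ) : ℝ :=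
  blockEntropy ℓ₀ H₁ k + blockEntropy ℓ₀ H₁ k' - blockEntropy ℓ₀ H₁ (k + k')

/-- Universal learning curve `Λ(k) = H₁(k+1) − H₁(k)`. -/
noncomputable def learningCurve (H₁ : ℕ → ℝ) (k : ℕ) : ℝ := H₁ (k + 1) - H₁ k

/-!
Moving one symbol from the future window to the past one changes the predictive information by
`Λ(k) - Λ(k + k')`, so it suffices that `Λ(n) → 0`. The increments `Λ` are nonnegative and
nonincreasing, hence `(n + 1) Λ(n) ≤ Λ(0) + ⋯ + Λ(n) = H₁(n + 1)`, and `H₁(n)/n → 0` squeezes `Λ`.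
-/

theorem tendsto_zero_of_antitone_of_cesaro {f : ℕ → ℝ} (hf : Antitone f) (hf0 : ∀ n, 0 ≤ f n)
    (hmean : Tendsto (fun n : ℕ => (∑ i ∈ Finset.range n, f i) / n) atTop (𝓝 0)) :
    Tendsto f atTop (𝓝 0) := by
  have hbound (n : ℕ) : f n ≤ (∑ i ∈ Finset.range (n + 1), f i) / (n + 1 : ℕ) := by
    rw [le_div_iff₀ (by positivity), mul_comm]
    simpa using Finset.card_nsmul_le_sum _ f _ fun i hi => hf (Finset.mem_range_succ_iff.mp hi)
  exact squeeze_zero hf0 hbound (hmean.comp (tendsto_add_atTop_nat 1))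

section learningCurve

variable {H₁ : ℕ → ℝ}

theorem learningCurve_antitone (hconcave : ∀ n, H₁ (n + 2) - H₁ (n + 1) ≤ H₁ (n + 1) - H₁ n) :
    Antitone (learningCurve H₁) :=
  antitone_nat_of_succ_le hconcave

theorem learningCurve_nonneg (hmono : Monotone H₁) (n : ℕ) : 0 ≤ learningCurve H₁ n :=
  sub_nonneg.mpr (hmono n.le_succ)

theorem sum_range_learningCurve (h0 : H₁ 0 = 0) (n : ℕ) :
    ∑ i ∈ Finset.range n, learningCurve H₁ i = H₁ n :=
  (Finset.sum_range_sub H₁ n).trans (by rw [h0, sub_zero])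

theorem learningCurve_tendsto_zero (h0 : H₁ 0 = 0) (hmono : Monotone H₁)
    (hconcave : ∀ n, H₁ (n + 2) - H₁ (n + 1) ≤ H₁ (n + 1) - H₁ n)
    (hsublin : Tendsto (fun n : ℕ => H₁ n / n) atTop (𝓝 0)) :
    Tendsto (learningCurve H₁) atTop (𝓝 0) :=
  tendsto_zero_of_antitone_of_cesaro (learningCurve_antitone hconcave)
    (learningCurve_nonneg hmono) (by simpa only [sum_range_learningCurve h0] using hsublin)

theorem Ipred_succ_sub_Ipred (ℓ₀ : ℝ) (k k' : ℕ) :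
    Ipred ℓ₀ H₁ (k + 1) k' - Ipred ℓ₀ H₁ k k' = learningCurve H₁ k - learningCurve H₁ (k + k') := by
  simp only [Ipred, blockEntropy, learningCurve, Nat.add_right_comm k 1 k']
  push_cast
  ring

end learningCurve

theorem Ipred_increment_tendsto_learningCurve_general
    (ℓ₀ : ℝ) (H₁ : ℕ → ℝ)
    (h0 : H₁ 0 = 0)
    (hmono : Monotone H₁)
    (hconcave : ∀ n, H₁ (n + 2) - H₁ (n + 1) ≤ H₁ (n + 1) - H₁ n)
    (hsublin : Tendsto (fun n : ℕ => H₁ n / n) atTop (𝓝 0))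
    (k : ℕ) :
    Tendsto (fun k' : ℕ => Ipred ℓ₀ H₁ (k + 1) k' - Ipred ℓ₀ H₁ k k') atTop
      (𝓝 (learningCurve H₁ k)) ∧
    learningCurve H₁ k = H₁ (k + 1) - H₁ k := by
  refine ⟨?_, rfl⟩
  have hΛ := (learningCurve_tendsto_zero h0 hmono hconcave hsublin).comp (tendsto_add_atTop_nat k)
  simp only [Ipred_succ_sub_Ipred]
  simpa only [sub_zero, Function.comp_def, Nat.add_comm] using tendsto_const_nhds.sub hΛ

/-- For every fixed `k ≥ 1`, the increment of the predictive information in the past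
window converges to the universal learning curve as the future window grows:
`lim_{k'→∞} (I_pred(k+1,k') − I_pred(k,k')) = Λ(k) = H₁(k+1) − H₁(k)`. -/
theorem Ipred_increment_tendsto_learningCurve
    (ℓ₀ : ℝ) (H₁ : ℕ → ℝ)
    (h0 : H₁ 0 = 0)
    (hnonneg : ∀ n, 0 ≤ H₁ n)
    (hmono : Monotone H₁)
    (hsubadd : ∀ m n, H₁ (m + n) ≤ H₁ m + H₁ n)
    (hconcave : ∀ n, H₁ (n + 2) - H₁ (n + 1) ≤ H₁ (n + 1) - H₁ n)
    (hsublin : Tendsto (fun n : ℕ => H₁ n / n) atTop (𝓝 0))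
    (k : ℕ) (hk : 1 ≤ k) :
    Tendsto (fun k' : ℕ => Ipred ℓ₀ H₁ (k + 1) k' - Ipred ℓ₀ H₁ k k') atTop
      (𝓝 (learningCurve H₁ k)) ∧
    learningCurve H₁ k = H₁ (k + 1) - H₁ k :=
  Ipred_increment_tendsto_learningCurve_general ℓ₀ H₁ h0 hmono hconcave hsublin k
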